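/- Let X ⊆ ℝ be a finite union of compact intervals and μ a Borel probability measure on X. Then for every ε > 0 there exists a finite collection 𝒢 of CPWA hat functions on X (obtained from a sufficiently fine grid of knots containing all interval endpoints) such that sup_{ν ∈ [μ]_𝒢} W₁(μ, ν) ≤ ε, where [μ]_𝒢 := {ν ∈ P(X) : ∫ g dν = ∫ g dμ for all g ∈ 𝒢}. -/

import Mathlib

/-!
Refine a grid on each interval until every cell between consecutive knots that meets `X` has
length at most `ε / 2`. The hats `g 0, …, g M` form a partition of unity on `X`, so matching the
moments of `g 1, …, g M` also matches that of `g 0`. With `m j` the common mass of `g j`,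
`γ = ∑ j, (g j • μ) ⊗ (m j)⁻¹ (g j • ν)` couples `μ` and `ν`, and it only pairs points lying in the
support of a common hat; on `X` that support stays within `ε / 2` of the knot `c j`, so
`|x - y| ≤ ε` holds `γ`-almost everywhere. With a single knot, `X` is a point and the product
coupling already has cost zero.
-/

open MeasureTheory Set ENNReal

section Coupling

variable {α ι : Type*} [MeasurableSpace α] {μ ν : Measure α} {s : Finset ι} {φ : ι → α → ℝ≥0∞}

noncomputable def partitionCoupling (μ ν : Measure α) (s : Finset ι) (φ : ι → α → ℝ≥0∞) :
    Measure (α × α) :=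
  ∑ i ∈ s, (μ.withDensity (φ i)).prod ((∫⁻ x, φ i x ∂ν)⁻¹ • ν.withDensity (φ i))

-- If the mass vanishes, `0⁻¹ * 0 = 0 ≠ 1`, but then the measure itself is zero.
lemma inv_lintegral_mul_smul_withDensity {f : α → ℝ≥0∞} (hf : ∫⁻ x, f x ∂μ ≠ ∞) :
    ((∫⁻ x, f x ∂μ)⁻¹ * ∫⁻ x, f x ∂μ) • μ.withDensity f = μ.withDensity f := by
  by_cases h0 : ∫⁻ x, f x ∂μ = 0
  · have : μ.withDensity f = 0 := by
      rw [← Measure.measure_univ_eq_zero, withDensity_apply _ MeasurableSet.univ,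
        Measure.restrict_univ, h0]
    rw [this, smul_zero]
  · rw [ENNReal.inv_mul_cancel h0 hf, one_smul]

lemma sum_withDensity_of_sum_eq_one (hφ : ∀ i ∈ s, Measurable (φ i))
    (h : ∀ᵐ x ∂μ, ∑ i ∈ s, φ i x = 1) : ∑ i ∈ s, μ.withDensity (φ i) = μ := by
  ext A hA
  simp_rw [Measure.finsetSum_apply, withDensity_apply _ hA]
  rw [← lintegral_finsetSum _ hφ, lintegral_congr_ae (ae_restrict_of_ae h), setLIntegral_one]

lemma lintegral_ne_top_of_sum_eq_one [IsFiniteMeasure μ] {i : ι} (hi : i ∈ s)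
    (h : ∀ᵐ x ∂μ, ∑ i ∈ s, φ i x = 1) : ∫⁻ x, φ i x ∂μ ≠ ∞ := by
  refine ne_top_of_le_ne_top (measure_ne_top μ univ) ?_
  calc ∫⁻ x, φ i x ∂μ ≤ ∫⁻ _, 1 ∂μ := lintegral_mono_ae <| h.mono fun x hx =>
        (Finset.single_le_sum (f := fun j => φ j x) (fun _ _ => zero_le) hi).trans_eq hx
    _ = μ univ := lintegral_one

theorem ae_partitionCoupling (hφ : ∀ i ∈ s, Measurable (φ i)) :
    ∀ᵐ p ∂partitionCoupling μ ν s φ, ∃ i ∈ s, φ i p.1 ≠ 0 ∧ φ i p.2 ≠ 0 := by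
  rw [partitionCoupling, ← Measure.sum_coe_finset, Measure.ae_sum_iff]
  rintro ⟨i, hi⟩
  have hμi : ∀ᵐ x ∂μ.withDensity (φ i), φ i x ≠ 0 :=
    (ae_withDensity_iff (hφ i hi)).2 (ae_of_all _ fun _ h => h)
  have hνi : ∀ᵐ x ∂ν.withDensity (φ i), φ i x ≠ 0 :=
    (ae_withDensity_iff (hφ i hi)).2 (ae_of_all _ fun _ h => h)
  filter_upwards [Measure.quasiMeasurePreserving_fst.ae hμi,
    Measure.quasiMeasurePreserving_snd.ae (Measure.ae_smul_measure hνi _)] with p hp₁ hp₂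
  exact ⟨i, hi, hp₁, hp₂⟩

variable [IsFiniteMeasure ν]

theorem map_fst_partitionCoupling (hφ : ∀ i ∈ s, Measurable (φ i))
    (hμ : ∀ᵐ x ∂μ, ∑ i ∈ s, φ i x = 1) (hν : ∀ᵐ x ∂ν, ∑ i ∈ s, φ i x = 1)
    (hmass : ∀ i ∈ s, ∫⁻ x, φ i x ∂μ = ∫⁻ x, φ i x ∂ν) :
    (partitionCoupling μ ν s φ).map Prod.fst = μ := by
  rw [partitionCoupling, Measure.map_finset_sum measurable_fst.aemeasurable]
  conv_rhs => rw [← sum_withDensity_of_sum_eq_one hφ hμ]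
  refine Finset.sum_congr rfl fun i hi => ?_
  rw [Measure.map_fst_prod, Measure.smul_apply, withDensity_apply _ .univ, Measure.restrict_univ,
    smul_eq_mul, ← hmass i hi,
    inv_lintegral_mul_smul_withDensity
      ((hmass i hi).trans_ne (lintegral_ne_top_of_sum_eq_one hi hν))]

theorem map_snd_partitionCoupling (hφ : ∀ i ∈ s, Measurable (φ i))
    (hν : ∀ᵐ x ∂ν, ∑ i ∈ s, φ i x = 1)
    (hmass : ∀ i ∈ s, ∫⁻ x, φ i x ∂μ = ∫⁻ x, φ i x ∂ν) :
    (partitionCoupling μ ν s φ).map Prod.snd = ν := by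
  rw [partitionCoupling, Measure.map_finset_sum measurable_snd.aemeasurable]
  conv_rhs => rw [← sum_withDensity_of_sum_eq_one hφ hν]
  refine Finset.sum_congr rfl fun i hi => ?_
  rw [Measure.map_snd_prod, withDensity_apply _ .univ, Measure.restrict_univ, smul_smul,
    hmass i hi, mul_comm, inv_lintegral_mul_smul_withDensity (lintegral_ne_top_of_sum_eq_one hi hν)]

omit [IsFiniteMeasure ν]

variable {φ : ι → α → ℝ}

lemma integrable_of_sum_eq_one [IsFiniteMeasure μ] (hmeas : ∀ i ∈ s, Measurable (φ i))
    (hnn : ∀ i ∈ s, ∀ x, 0 ≤ φ i x) (h : ∀ᵐ x ∂μ, ∑ i ∈ s, φ i x = 1) {i : ι} (hi : i ∈ s) :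
    Integrable (φ i) μ := by
  refine (integrable_const 1).mono' (hmeas i hi).aestronglyMeasurable (h.mono fun x hx => ?_)
  rw [Real.norm_of_nonneg (hnn i hi x), ← hx]
  exact Finset.single_le_sum (fun j hj => hnn j hj x) hi

lemma integral_eq_of_sum_eq_one [IsProbabilityMeasure μ] [IsProbabilityMeasure ν]
    (hmeas : ∀ i ∈ s, Measurable (φ i)) (hnn : ∀ i ∈ s, ∀ x, 0 ≤ φ i x)
    (hμ : ∀ᵐ x ∂μ, ∑ i ∈ s, φ i x = 1) (hν : ∀ᵐ x ∂ν, ∑ i ∈ s, φ i x = 1) {i₀ : ι} (hi₀ : i₀ ∈ s)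
    (h : ∀ i ∈ s, i ≠ i₀ → ∫ x, φ i x ∂μ = ∫ x, φ i x ∂ν) :
    ∫ x, φ i₀ x ∂μ = ∫ x, φ i₀ x ∂ν := by
  classical
  have htotal : ∀ (ρ : Measure α) [IsProbabilityMeasure ρ], (∀ᵐ x ∂ρ, ∑ i ∈ s, φ i x = 1) →
      ∫ x, φ i₀ x ∂ρ + ∑ i ∈ s.erase i₀, ∫ x, φ i x ∂ρ = 1 := by
    intro ρ _ hρ
    rw [Finset.add_sum_erase s (fun i => ∫ x, φ i x ∂ρ) hi₀, ← integral_finsetSum s fun i hi =>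
      integrable_of_sum_eq_one hmeas hnn hρ hi, integral_congr_ae hρ, integral_const]
    simp
  have hrest : ∑ i ∈ s.erase i₀, ∫ x, φ i x ∂μ = ∑ i ∈ s.erase i₀, ∫ x, φ i x ∂ν :=
    Finset.sum_congr rfl fun i hi => h i (Finset.mem_of_mem_erase hi) (Finset.ne_of_mem_erase hi)
  linarith [htotal μ hμ, htotal ν hν]

theorem exists_coupling_of_sum_eq_one [IsProbabilityMeasure μ] [IsProbabilityMeasure ν]
    (hmeas : ∀ i ∈ s, Measurable (φ i)) (hnn : ∀ i ∈ s, ∀ x, 0 ≤ φ i x)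
    (hμ : ∀ᵐ x ∂μ, ∑ i ∈ s, φ i x = 1) (hν : ∀ᵐ x ∂ν, ∑ i ∈ s, φ i x = 1)
    (hmass : ∀ i ∈ s, ∫ x, φ i x ∂μ = ∫ x, φ i x ∂ν) :
    ∃ γ : Measure (α × α), γ.map Prod.fst = μ ∧ γ.map Prod.snd = ν ∧
      ∀ᵐ p ∂γ, ∃ i ∈ s, φ i p.1 ≠ 0 ∧ φ i p.2 ≠ 0 := by
  set ψ : ι → α → ℝ≥0∞ := fun i x => ENNReal.ofReal (φ i x)
  have hψ : ∀ i ∈ s, Measurable (ψ i) := fun i hi => (hmeas i hi).ennreal_ofReal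
  have hsum : ∀ ρ : Measure α, (∀ᵐ x ∂ρ, ∑ i ∈ s, φ i x = 1) → ∀ᵐ x ∂ρ, ∑ i ∈ s, ψ i x = 1 :=
    fun ρ h => h.mono fun x hx => by
      rw [← ENNReal.ofReal_sum_of_nonneg fun i hi => hnn i hi x, hx, ENNReal.ofReal_one]
  have hmass' : ∀ i ∈ s, ∫⁻ x, ψ i x ∂μ = ∫⁻ x, ψ i x ∂ν := fun i hi => by
    rw [← ofReal_integral_eq_lintegral_ofReal (integrable_of_sum_eq_one hmeas hnn hμ hi)
        (ae_of_all _ (hnn i hi)),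
      ← ofReal_integral_eq_lintegral_ofReal (integrable_of_sum_eq_one hmeas hnn hν hi)
        (ae_of_all _ (hnn i hi)), hmass i hi]
  refine ⟨partitionCoupling μ ν s ψ, map_fst_partitionCoupling hψ (hsum μ hμ) (hsum ν hν) hmass',
    map_snd_partitionCoupling hψ (hsum ν hν) hmass', (ae_partitionCoupling hψ).mono ?_⟩
  rintro p ⟨i, hi, h₁, h₂⟩
  exact ⟨i, hi, fun h => h₁ (by simp [ψ, h]), fun h => h₂ (by simp [ψ, h])⟩

end Coupling

section Transport

noncomputable def transportCosts (μ ν : Measure ℝ) : Set ℝ :=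
  {r | ∃ γ : Measure (ℝ × ℝ), IsProbabilityMeasure γ ∧ γ.map Prod.fst = μ ∧ γ.map Prod.snd = ν ∧
    r = ∫ p, |p.1 - p.2| ∂γ}

variable {μ ν : Measure ℝ} {ε : ℝ}

lemma sInf_transportCosts_le [IsProbabilityMeasure μ] {γ : Measure (ℝ × ℝ)}
    (h₁ : γ.map Prod.fst = μ) (h₂ : γ.map Prod.snd = ν) (hγ : ∀ᵐ p ∂γ, |p.1 - p.2| ≤ ε) :
    sInf (transportCosts μ ν) ≤ ε := by
  have : IsProbabilityMeasure (γ.map Prod.fst) := h₁ ▸ inferInstance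
  have hγP := Measure.isProbabilityMeasure_of_map (μ := γ) Prod.fst
  have hint : Integrable (fun p : ℝ × ℝ => |p.1 - p.2|) γ :=
    (integrable_const ε).mono' (by fun_prop) <| hγ.mono fun p hp => by
      rwa [Real.norm_eq_abs, abs_abs]
  refine csInf_le_of_le ⟨0, ?_⟩ ⟨γ, hγP, h₁, h₂, rfl⟩ ?_
  · rintro r ⟨γ', -, -, -, rfl⟩
    exact integral_nonneg fun p => abs_nonneg _
  · calc ∫ p, |p.1 - p.2| ∂γ ≤ ∫ _, ε ∂γ := integral_mono_ae hint (integrable_const ε) hγ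
      _ = ε := by simp

lemma sInf_transportCosts_le_of_ae_mem [IsProbabilityMeasure μ] [IsProbabilityMeasure ν]
    {X : Set ℝ} (hμ : ∀ᵐ x ∂μ, x ∈ X) (hν : ∀ᵐ x ∂ν, x ∈ X)
    (hX : ∀ x ∈ X, ∀ y ∈ X, |x - y| ≤ ε) : sInf (transportCosts μ ν) ≤ ε :=
  sInf_transportCosts_le (γ := μ.prod ν) (by simp) (by simp) <| by
    filter_upwards [Measure.quasiMeasurePreserving_fst.ae hμ,
      Measure.quasiMeasurePreserving_snd.ae hν] with p h₁ h₂ using hX _ h₁ _ h₂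

end Transport

namespace CPWA

variable (c : ℕ → ℝ)

noncomputable def rampUp (j : ℕ) (x : ℝ) : ℝ := max (x - c (j - 1)) 0 / (c j - c (j - 1))

noncomputable def rampDown (j : ℕ) (x : ℝ) : ℝ := max (c (j + 1) - x) 0 / (c (j + 1) - c j)

noncomputable def hat (M j : ℕ) (x : ℝ) : ℝ :=
  if j = 0 then rampDown c j x else if j = M then rampUp c j x
  else min (rampUp c j x) (rampDown c j x)

variable {c} {M i j : ℕ} {x : ℝ}

@[fun_prop]
lemma measurable_hat : Measurable (hat c M j) := by
  unfold hat rampUp rampDown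
  split_ifs <;> fun_prop

lemma exists_mem_cell : ∀ {M : ℕ}, 0 < M → x ∈ Icc (c 0) (c M) →
    ∃ i < M, x ∈ Icc (c i) (c (i + 1))
  | 0, hM, _ => absurd hM (lt_irrefl 0)
  | M + 1, _, hx => by
    by_cases h : 0 < M ∧ x ≤ c M
    · obtain ⟨i, hi, hxi⟩ := exists_mem_cell h.1 ⟨hx.1, h.2⟩
      exact ⟨i, by omega, hxi⟩
    · refine ⟨M, by omega, ?_, hx.2⟩
      rcases Nat.eq_zero_or_pos M with rfl | hpos
      · exact hx.1
      · exact (not_le.1 fun hle => h ⟨hpos, hle⟩).le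

lemma rampUp_nonneg (h : c (j - 1) ≤ c j) : 0 ≤ rampUp c j x :=
  div_nonneg (le_max_right _ _) (sub_nonneg.2 h)

lemma rampDown_nonneg (h : c j ≤ c (j + 1)) : 0 ≤ rampDown c j x :=
  div_nonneg (le_max_right _ _) (sub_nonneg.2 h)

lemma rampUp_of_le (hx : x ≤ c (j - 1)) : rampUp c j x = 0 := by
  rw [rampUp, max_eq_right (by linarith), zero_div]

lemma rampDown_of_le (hx : c (j + 1) ≤ x) : rampDown c j x = 0 := by
  rw [rampDown, max_eq_right (by linarith), zero_div]

lemma rampUp_succ (hx : c i ≤ x) : rampUp c (i + 1) x = (x - c i) / (c (i + 1) - c i) := by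
  rw [rampUp, Nat.add_sub_cancel, max_eq_left (by linarith)]

lemma rampDown_of_le_succ (hx : x ≤ c (i + 1)) :
    rampDown c i x = (c (i + 1) - x) / (c (i + 1) - c i) := by
  rw [rampDown, max_eq_left (by linarith)]

lemma one_le_rampUp (h : c (j - 1) < c j) (hx : c j ≤ x) : 1 ≤ rampUp c j x := by
  rw [rampUp, one_le_div (by linarith)]
  exact le_max_of_le_left (by linarith)

lemma one_le_rampDown (h : c j < c (j + 1)) (hx : x ≤ c j) : 1 ≤ rampDown c j x := by
  rw [rampDown, one_le_div (by linarith)]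
  exact le_max_of_le_left (by linarith)

-- For `M = 0`, `rampUp c 0` divides by `c 0 - c 0 = 0`, so `rampDown c 0` has to vanish as well.
lemma hat_self (h : M = 0 → c 1 = c 0) : hat c M M x = rampUp c M x := by
  by_cases hM : M = 0
  · subst hM
    simp [hat, rampUp, rampDown, h rfl]
  · rw [hat, if_neg hM, if_pos rfl]

variable (hc : StrictMonoOn c (Iic M))
include hc

lemma lt_succ_of_strictMonoOn (hi : i < M) : c i < c (i + 1) :=
  hc (mem_Iic.2 hi.le) (mem_Iic.2 hi) (Nat.lt_succ_self i)

lemma pred_lt_of_strictMonoOn (h0 : 0 < j) (hj : j ≤ M) : c (j - 1) < c j :=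
  hc (mem_Iic.2 (by omega)) (mem_Iic.2 hj) (by omega)

lemma hat_nonneg (hM : 0 < M) (hj : j ≤ M) : 0 ≤ hat c M j x := by
  have hdown : j < M → 0 ≤ rampDown c j x := fun h =>
    rampDown_nonneg (lt_succ_of_strictMonoOn hc h).le
  have hup : 0 < j → 0 ≤ rampUp c j x := fun h =>
    rampUp_nonneg (pred_lt_of_strictMonoOn hc h hj).le
  unfold hat
  split_ifs with h0 hM'
  · exact hdown (by omega)
  · exact hup (by omega)
  · exact le_min (hup (by omega)) (hdown (by omega))

lemma hat_of_le_pred (h0 : 0 < j) (hj : j ≤ M) (hx : x ≤ c (j - 1)) : hat c M j x = 0 := by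
  rw [hat, if_neg h0.ne']
  split_ifs with hjM
  · exact rampUp_of_le hx
  · rw [rampUp_of_le hx]
    exact min_eq_left (rampDown_nonneg (lt_succ_of_strictMonoOn hc (by omega)).le)

lemma hat_of_succ_le (hj : j < M) (hx : c (j + 1) ≤ x) : hat c M j x = 0 := by
  rw [hat, if_neg hj.ne]
  split_ifs with h0
  · exact rampDown_of_le hx
  · rw [rampDown_of_le hx]
    exact min_eq_right (rampUp_nonneg (pred_lt_of_strictMonoOn hc (by omega) hj.le).le)

section Cell

variable (hi : i < M) (hx : x ∈ Icc (c i) (c (i + 1)))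
include hi hx

lemma hat_of_mem_cell : hat c M i x = (c (i + 1) - x) / (c (i + 1) - c i) := by
  rw [hat, if_neg hi.ne, ← rampDown_of_le_succ hx.2]
  split_ifs with h0
  · rfl
  refine min_eq_right <|
    le_trans ?_ (one_le_rampUp (pred_lt_of_strictMonoOn hc (by omega) hi.le) hx.1)
  rw [rampDown_of_le_succ hx.2, div_le_one (by linarith [lt_succ_of_strictMonoOn hc hi])]
  linarith [hx.1]

lemma hat_succ_of_mem_cell : hat c M (i + 1) x = (x - c i) / (c (i + 1) - c i) := by
  rw [hat, if_neg (Nat.succ_ne_zero i), ← rampUp_succ hx.1]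
  split_ifs with hM
  · rfl
  refine min_eq_left (le_trans ?_ (one_le_rampDown (lt_succ_of_strictMonoOn hc (by omega)) hx.2))
  rw [rampUp_succ hx.1, div_le_one (by linarith [lt_succ_of_strictMonoOn hc hi])]
  linarith [hx.2]

lemma hat_eq_zero_of_mem_cell (hj : j ≤ M) (hji : j ≠ i) (hji' : j ≠ i + 1) : hat c M j x = 0 := by
  rcases lt_or_gt_of_ne hji with hlt | hgt
  · exact hat_of_succ_le hc (by omega) <|
      (hc.monotoneOn (mem_Iic.2 (by omega)) (mem_Iic.2 hi.le) (by omega)).trans hx.1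
  · exact hat_of_le_pred hc (by omega) hj <|
      hx.2.trans (hc.monotoneOn (mem_Iic.2 hi) (mem_Iic.2 (by omega)) (by omega))

lemma sum_hat_of_mem_cell : ∑ j ∈ Finset.range (M + 1), hat c M j x = 1 := by
  have hd := lt_succ_of_strictMonoOn hc hi
  rw [Finset.sum_eq_add_of_mem i (i + 1) (by simp; omega) (by simp; omega) (by omega)
      fun j hj hne => hat_eq_zero_of_mem_cell hc hi hx (by simpa [Nat.lt_succ_iff] using hj)
        hne.1 hne.2,
    hat_of_mem_cell hc hi hx, hat_succ_of_mem_cell hc hi hx, ← add_div,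
    div_eq_one_iff_eq (by linarith)]
  ring

end Cell

lemma sum_hat_eq_one (hM : 0 < M) (hx : x ∈ Icc (c 0) (c M)) :
    ∑ j ∈ Finset.range (M + 1), hat c M j x = 1 := by
  obtain ⟨i, hi, hxi⟩ := exists_mem_cell hM hx
  exact sum_hat_of_mem_cell hc hi hxi

lemma abs_sub_le_of_hat_ne_zero (hM : 0 < M) (hx : x ∈ Icc (c 0) (c M)) (hj : j ≤ M)
    (hne : hat c M j x ≠ 0) {δ : ℝ} (hδ : 0 ≤ δ)
    (hshort : ∀ i < M, x ∈ Ioo (c i) (c (i + 1)) → c (i + 1) - c i ≤ δ) : |x - c j| ≤ δ := by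
  obtain ⟨i, hi, hxi⟩ := exists_mem_cell hM hx
  have hd := lt_succ_of_strictMonoOn hc hi
  by_cases hji : j = i
  · subst hji
    rcases eq_or_lt_of_le hxi.1 with hxj | hxj
    · simpa [← hxj] using hδ
    have hxj' : x < c (j + 1) := lt_of_le_of_ne hxi.2 fun h => hne <| by
      rw [hat_of_mem_cell hc hi hxi, h, sub_self, zero_div]
    rw [abs_of_pos (sub_pos.2 hxj)]
    linarith [hshort j hi ⟨hxj, hxj'⟩]
  by_cases hji' : j = i + 1
  · subst hji'
    rcases eq_or_lt_of_le hxi.2 with hxj | hxj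
    · simpa [hxj] using hδ
    have hxj' : c i < x := lt_of_le_of_ne hxi.1 fun h => hne <| by
      rw [hat_succ_of_mem_cell hc hi hxi, h, sub_self, zero_div]
    rw [abs_of_neg (sub_neg.2 hxj)]
    linarith [hshort i hi ⟨hxj', hxj⟩]
  exact absurd (hat_eq_zero_of_mem_cell hc hi hxi hj hji hji') hne

theorem exists_coupling_of_hat_moments (hM : 0 < M) {μ ν : Measure ℝ} [IsProbabilityMeasure μ]
    [IsProbabilityMeasure ν] (hμ : ∀ᵐ x ∂μ, x ∈ Icc (c 0) (c M))
    (hν : ∀ᵐ x ∂ν, x ∈ Icc (c 0) (c M))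
    (hmom : ∀ j, 1 ≤ j → j ≤ M → ∫ x, hat c M j x ∂ν = ∫ x, hat c M j x ∂μ) :
    ∃ γ : Measure (ℝ × ℝ), γ.map Prod.fst = μ ∧ γ.map Prod.snd = ν ∧
      ∀ᵐ p ∂γ, ∃ j ≤ M, hat c M j p.1 ≠ 0 ∧ hat c M j p.2 ≠ 0 := by
  have hsum : ∀ ρ : Measure ℝ, (∀ᵐ x ∂ρ, x ∈ Icc (c 0) (c M)) →
      ∀ᵐ x ∂ρ, ∑ j ∈ Finset.range (M + 1), hat c M j x = 1 :=
    fun ρ h => h.mono fun x hx => sum_hat_eq_one hc hM hx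
  have hnn : ∀ j ∈ Finset.range (M + 1), ∀ x, 0 ≤ hat c M j x :=
    fun j hj x => hat_nonneg hc hM (Nat.lt_succ_iff.1 (Finset.mem_range.1 hj))
  have hmom' : ∀ j ∈ Finset.range (M + 1), j ≠ 0 → ∫ x, hat c M j x ∂μ = ∫ x, hat c M j x ∂ν :=
    fun j hj hj0 => (hmom j (by omega) (Nat.lt_succ_iff.1 (Finset.mem_range.1 hj))).symm
  have hmass : ∀ j ∈ Finset.range (M + 1), ∫ x, hat c M j x ∂μ = ∫ x, hat c M j x ∂ν := by
    intro j hj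
    rcases eq_or_ne j 0 with rfl | hj0
    · exact integral_eq_of_sum_eq_one (fun j _ => measurable_hat) hnn (hsum μ hμ) (hsum ν hν)
        (Finset.mem_range.2 M.succ_pos) hmom'
    · exact hmom' j hj hj0
  obtain ⟨γ, h₁, h₂, hγ⟩ := exists_coupling_of_sum_eq_one (fun j _ => measurable_hat) hnn
    (hsum μ hμ) (hsum ν hν) hmass
  exact ⟨γ, h₁, h₂, hγ.mono fun p ⟨j, hj, hp⟩ => ⟨j, Nat.lt_succ_iff.1 (Finset.mem_range.1 hj), hp⟩⟩

end CPWA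


section Grid

noncomputable def gridCount (a b δ : ℝ) : ℕ := ⌈(b - a) / δ⌉₊ + 1

noncomputable def uniformGrid (a b δ : ℝ) : Finset ℝ :=
  (Finset.range (gridCount a b δ + 1)).image fun m : ℕ => a + m * ((b - a) / gridCount a b δ)

variable {a b δ x : ℝ}

lemma grid_mem_uniformGrid {m : ℕ} (hm : m ≤ gridCount a b δ) :
    a + m * ((b - a) / gridCount a b δ) ∈ uniformGrid a b δ :=
  Finset.mem_image_of_mem _ (Finset.mem_range.2 (Nat.lt_succ_of_le hm))

lemma gridCount_mul_step : (gridCount a b δ : ℝ) * ((b - a) / gridCount a b δ) = b - a :=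
  mul_div_cancel₀ _ (Nat.cast_ne_zero.2 (Nat.succ_ne_zero _))

lemma left_mem_uniformGrid : a ∈ uniformGrid a b δ := by
  simpa using grid_mem_uniformGrid (a := a) (b := b) (δ := δ) (Nat.zero_le _)

lemma right_mem_uniformGrid : b ∈ uniformGrid a b δ := by
  simpa [gridCount_mul_step] using grid_mem_uniformGrid (a := a) (b := b) (δ := δ) le_rfl

lemma div_gridCount_le (hδ : 0 < δ) : (b - a) / gridCount a b δ ≤ δ := by
  rw [div_le_iff₀ (by unfold gridCount; positivity), gridCount]
  have := (div_le_iff₀ hδ).1 (Nat.le_ceil ((b - a) / δ))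
  push_cast
  nlinarith

lemma uniformGrid_subset (hab : a ≤ b) : (uniformGrid a b δ : Set ℝ) ⊆ Icc a b := by
  intro x hx
  obtain ⟨m, hm, rfl⟩ := Finset.mem_image.1 hx
  have hstep : 0 ≤ (b - a) / gridCount a b δ := div_nonneg (sub_nonneg.2 hab) (Nat.cast_nonneg _)
  have hmN : (m : ℝ) ≤ gridCount a b δ := by
    exact_mod_cast Nat.lt_succ_iff.1 (Finset.mem_range.1 hm)
  constructor
  · nlinarith [Nat.cast_nonneg (α := ℝ) m]
  · nlinarith [gridCount_mul_step (a := a) (b := b) (δ := δ)]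

lemma exists_uniformGrid_sandwich (hδ : 0 < δ) (hx : x ∈ Icc a b) :
    ∃ t ∈ uniformGrid a b δ, ∃ t' ∈ uniformGrid a b δ, t ≤ x ∧ x ≤ t' ∧ t' - t ≤ δ := by
  rcases eq_or_lt_of_le (hx.1.trans hx.2) with hab | hab
  · subst hab
    exact ⟨a, left_mem_uniformGrid, a, left_mem_uniformGrid, hx.1, hx.2, by simp [hδ.le]⟩
  set h := (b - a) / gridCount a b δ
  have hpos : 0 < h := div_pos (sub_pos.2 hab) (by unfold gridCount; positivity)
  set y := (x - a) / h
  have hy : 0 ≤ y := div_nonneg (sub_nonneg.2 hx.1) hpos.le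
  have hyN : ⌈y⌉₊ ≤ gridCount a b δ := Nat.ceil_le.2 <| by
    rw [div_le_iff₀ hpos, gridCount_mul_step]
    linarith [hx.2]
  have hfloor : (⌊y⌋₊ : ℝ) * h ≤ x - a := by
    simpa [y, div_mul_cancel₀ _ hpos.ne'] using mul_le_mul_of_nonneg_right (Nat.floor_le hy) hpos.le
  have hceil : x - a ≤ (⌈y⌉₊ : ℝ) * h := by
    simpa [y, div_mul_cancel₀ _ hpos.ne'] using mul_le_mul_of_nonneg_right (Nat.le_ceil y) hpos.le
  have hgap : (⌈y⌉₊ : ℝ) ≤ ⌊y⌋₊ + 1 := by exact_mod_cast Nat.ceil_le_floor_add_one y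
  refine ⟨_, grid_mem_uniformGrid ((Nat.floor_le_ceil y).trans hyN), _, grid_mem_uniformGrid hyN,
    by linarith, by linarith, ?_⟩
  nlinarith [div_gridCount_le (a := a) (b := b) hδ]

theorem exists_knots {k : ℕ} {lo hi : ℕ → ℝ} (hlohi : ∀ l < k, lo l ≤ hi l) (hδ : 0 < δ) :
    ∃ S : Finset ℝ, (∀ t ∈ S, t ∈ ⋃ l ∈ Finset.range k, Icc (lo l) (hi l)) ∧
      (∀ l < k, lo l ∈ S ∧ hi l ∈ S) ∧
      ∀ x ∈ ⋃ l ∈ Finset.range k, Icc (lo l) (hi l),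
        ∃ t ∈ S, ∃ t' ∈ S, t ≤ x ∧ x ≤ t' ∧ t' - t ≤ δ := by
  refine ⟨(Finset.range k).biUnion fun l => uniformGrid (lo l) (hi l) δ, ?_, ?_, ?_⟩
  · intro t ht
    obtain ⟨l, hl, htl⟩ := Finset.mem_biUnion.1 ht
    exact mem_biUnion hl (uniformGrid_subset (hlohi l (Finset.mem_range.1 hl)) htl)
  · intro l hl
    exact ⟨Finset.mem_biUnion.2 ⟨l, Finset.mem_range.2 hl, left_mem_uniformGrid⟩,
      Finset.mem_biUnion.2 ⟨l, Finset.mem_range.2 hl, right_mem_uniformGrid⟩⟩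
  · intro x hx
    obtain ⟨l, hl, hxl⟩ := mem_iUnion₂.1 hx
    obtain ⟨t, ht, t', ht', h⟩ := exists_uniformGrid_sandwich hδ hxl
    exact ⟨t, Finset.mem_biUnion.2 ⟨l, hl, ht⟩, t', Finset.mem_biUnion.2 ⟨l, hl, ht'⟩, h⟩

end Grid

section SortedEnum

variable {α : Type*} [LinearOrder α] (S : Finset α) (hS : S.Nonempty)

noncomputable def sortedEnum (i : ℕ) : α :=
  S.orderEmbOfFin rfl ⟨min i (S.card - 1), by have := hS.card_pos; omega⟩

variable {S hS} {i : ℕ} {y : α}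

lemma sortedEnum_mem : sortedEnum S hS i ∈ S := S.orderEmbOfFin_mem rfl _

lemma strictMonoOn_sortedEnum : StrictMonoOn (sortedEnum S hS) (Iic (S.card - 1)) :=
  fun i hi j hj hij => (S.orderEmbOfFin rfl).strictMono <| by
    simp only [Fin.mk_lt_mk]
    simp only [mem_Iic] at hi hj
    omega

lemma monotone_sortedEnum : Monotone (sortedEnum S hS) :=
  fun i j hij => (S.orderEmbOfFin rfl).monotone <| by
    simp only [Fin.mk_le_mk]
    omega

lemma sortedEnum_of_le (hi : S.card - 1 ≤ i) :
    sortedEnum S hS i = sortedEnum S hS (S.card - 1) := by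
  simp only [sortedEnum, min_eq_right hi, min_self]

lemma exists_sortedEnum_eq (hy : y ∈ S) : ∃ i ≤ S.card - 1, sortedEnum S hS i = y := by
  rw [← Finset.mem_coe, ← Finset.range_orderEmbOfFin S rfl] at hy
  obtain ⟨⟨i, hi⟩, rfl⟩ := hy
  exact ⟨i, by omega, by simp [sortedEnum, min_eq_left (by omega : i ≤ S.card - 1)]⟩

lemma mem_Icc_sortedEnum (hy : y ∈ S) :
    y ∈ Icc (sortedEnum S hS 0) (sortedEnum S hS (S.card - 1)) := by
  obtain ⟨i, hi, rfl⟩ := exists_sortedEnum_eq (hS := hS) hy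
  exact ⟨monotone_sortedEnum (Nat.zero_le _), monotone_sortedEnum hi⟩

lemma le_sortedEnum_or_sortedEnum_succ_le (hy : y ∈ S) :
    y ≤ sortedEnum S hS i ∨ sortedEnum S hS (i + 1) ≤ y := by
  obtain ⟨j, -, rfl⟩ := exists_sortedEnum_eq (hS := hS) hy
  exact (le_or_gt j i).imp (monotone_sortedEnum ·) (monotone_sortedEnum ·)

lemma le_sortedEnum_and_sortedEnum_succ_le {t t' x : α} (ht : t ∈ S) (ht' : t' ∈ S) (htx : t ≤ x)
    (hxt : x ≤ t') (hx : x ∈ Ioo (sortedEnum S hS i) (sortedEnum S hS (i + 1))) :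
    t ≤ sortedEnum S hS i ∧ sortedEnum S hS (i + 1) ≤ t' :=
  ⟨(le_sortedEnum_or_sortedEnum_succ_le ht).resolve_right fun h => (h.trans htx).not_gt hx.2,
    (le_sortedEnum_or_sortedEnum_succ_le ht').resolve_left fun h => (hxt.trans h).not_gt hx.1⟩

end SortedEnum

open CPWA in
theorem sInf_transportCosts_le_of_hat_moments {X : Set ℝ} {S : Finset ℝ} (hS : S.Nonempty)
    {δ : ℝ} (hδ : 0 ≤ δ) (hsand : ∀ x ∈ X, ∃ t ∈ S, ∃ t' ∈ S, t ≤ x ∧ x ≤ t' ∧ t' - t ≤ δ)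
    {μ ν : Measure ℝ} [IsProbabilityMeasure μ] [IsProbabilityMeasure ν]
    (hμ : ∀ᵐ x ∂μ, x ∈ X) (hν : ∀ᵐ x ∂ν, x ∈ X)
    (hmom : ∀ j, 1 ≤ j → j ≤ S.card - 1 → ∫ x, hat (sortedEnum S hS) (S.card - 1) j x ∂ν =
      ∫ x, hat (sortedEnum S hS) (S.card - 1) j x ∂μ) :
    sInf (transportCosts μ ν) ≤ 2 * δ := by
  set c := sortedEnum S hS
  set M := S.card - 1
  have hXc : ∀ x ∈ X, x ∈ Icc (c 0) (c M) := fun x hx => by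
    obtain ⟨t, ht, t', ht', htx, hxt, -⟩ := hsand x hx
    exact ⟨(mem_Icc_sortedEnum ht).1.trans htx, hxt.trans (mem_Icc_sortedEnum ht').2⟩
  rcases Nat.eq_zero_or_pos M with hM | hM
  · refine sInf_transportCosts_le_of_ae_mem hμ hν fun x hx y hy => ?_
    have hx' := hXc x hx
    have hy' := hXc y hy
    rw [hM, Icc_self, mem_singleton_iff] at hx' hy'
    rw [hx', hy', sub_self, abs_zero]
    positivity
  have hnear : ∀ x ∈ X, ∀ j ≤ M, hat c M j x ≠ 0 → |x - c j| ≤ δ := fun x hx j hj hne =>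
    abs_sub_le_of_hat_ne_zero strictMonoOn_sortedEnum hM (hXc x hx) hj hne hδ fun i _ hxi => by
      obtain ⟨t, ht, t', ht', htx, hxt, htt⟩ := hsand x hx
      have := le_sortedEnum_and_sortedEnum_succ_le ht ht' htx hxt hxi
      linarith [this.1, this.2]
  obtain ⟨γ, h₁, h₂, hγ⟩ := exists_coupling_of_hat_moments strictMonoOn_sortedEnum hM
    (hμ.mono hXc) (hν.mono hXc) hmom
  refine sInf_transportCosts_le h₁ h₂ ?_
  filter_upwards [hγ, ae_of_ae_map measurable_fst.aemeasurable (by rwa [h₁]),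
    ae_of_ae_map measurable_snd.aemeasurable (by rwa [h₂])] with p ⟨j, hj, hp₁, hp₂⟩ hx hy
  calc |p.1 - p.2| ≤ |p.1 - c j| + |c j - p.2| := abs_sub_le _ _ _
    _ ≤ δ + δ := add_le_add (hnear _ hx j hj hp₁) (abs_sub_comm p.2 (c j) ▸ hnear _ hy j hj hp₂)
    _ = 2 * δ := by ring

theorem stmt_6_general
    (k : ℕ) (lo hi : ℕ → ℝ)
    (hlohi : ∀ l < k, lo l ≤ hi l)
    (X : Set ℝ) (hXdef : X = ⋃ l ∈ Finset.range k, Icc (lo l) (hi l))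
    (μ : Measure ℝ) [IsProbabilityMeasure μ] (hμ : μ Xᶜ = 0)
    (ε : ℝ) (hε : 0 < ε) :
    ∃ (M : ℕ) (c : ℕ → ℝ) (g : ℕ → ℝ → ℝ),
      (∀ i < M, c i < c (i + 1)) ∧
      (∀ i ≤ M, c i ∈ X) ∧
      (∀ l < k, ∃ i ≤ M, c i = lo l) ∧
      (∀ l < k, ∃ i ≤ M, c i = hi l) ∧
      (∀ x, g 0 x = max (c 1 - x) 0 / (c 1 - c 0)) ∧
      (∀ j, 1 ≤ j → j < M → ∀ x,
        g j x = min (max (x - c (j - 1)) 0 / (c j - c (j - 1)))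
          (max (c (j + 1) - x) 0 / (c (j + 1) - c j))) ∧
      (∀ x, g M x = max (x - c (M - 1)) 0 / (c M - c (M - 1))) ∧
      (∀ ν : Measure ℝ, IsProbabilityMeasure ν → ν Xᶜ = 0 →
        (∀ j, 1 ≤ j → j ≤ M → ∫ x, g j x ∂ν = ∫ x, g j x ∂μ) →
        sInf {r | ∃ γ : Measure (ℝ × ℝ), IsProbabilityMeasure γ ∧
            γ.map Prod.fst = μ ∧ γ.map Prod.snd = ν ∧ r = ∫ p, |p.1 - p.2| ∂γ} ≤ ε) := by
  subst hXdef
  obtain ⟨S, hSX, hends, hsand⟩ := exists_knots hlohi (half_pos hε)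
  have hμX : ∀ᵐ x ∂μ, x ∈ ⋃ l ∈ Finset.range k, Icc (lo l) (hi l) := ae_iff.2 hμ
  have hS : S.Nonempty := by
    obtain ⟨x, hx⟩ := hμX.exists
    obtain ⟨t, ht, -⟩ := hsand x hx
    exact ⟨t, ht⟩
  refine ⟨S.card - 1, sortedEnum S hS, CPWA.hat (sortedEnum S hS) (S.card - 1),
    fun i hi => strictMonoOn_sortedEnum (mem_Iic.2 hi.le) (mem_Iic.2 hi) i.lt_succ_self,
    fun i _ => hSX _ sortedEnum_mem, fun l hl => exists_sortedEnum_eq (hends l hl).1,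
    fun l hl => exists_sortedEnum_eq (hends l hl).2, fun x => rfl, fun j hj hjM x => ?_,
    fun x => CPWA.hat_self fun hM => by rw [sortedEnum_of_le (hS := hS) (i := 1) (by omega), hM],
    fun ν _ hνX hmom => ?_⟩
  · rw [CPWA.hat, if_neg (by omega), if_neg (by omega)]
    rfl
  · exact (sInf_transportCosts_le_of_hat_moments hS (half_pos hε).le hsand hμX (ae_iff.2 hνX)
      hmom).trans_eq (by ring)

/-- for any probability measure `μ` on a finite union of compact intervals `X`
and any `ε > 0`, there exists a finite family of CPWA hat functions `g 1, …, g M`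
(built from a knot grid `c 0 < ⋯ < c M` contained in `X` and containing all interval
endpoints) such that every probability measure `ν` on `X` matching the moments of the hat
functions is within Wasserstein-1 distance `ε` of `μ`. -/
theorem stmt_6
    (k : ℕ) (hk : 1 ≤ k) (lo hi : ℕ → ℝ)
    (hlohi : ∀ l < k, lo l ≤ hi l)
    (hdisj : ∀ l, l + 1 < k → hi l < lo (l + 1))
    (X : Set ℝ) (hXdef : X = ⋃ l ∈ Finset.range k, Icc (lo l) (hi l))
    (μ : Measure ℝ) [IsProbabilityMeasure μ] (hμ : μ Xᶜ = 0)
    (ε : ℝ) (hε : 0 < ε) :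
    ∃ (M : ℕ) (c : ℕ → ℝ) (g : ℕ → ℝ → ℝ),
      (∀ i < M, c i < c (i + 1)) ∧
      (∀ i ≤ M, c i ∈ X) ∧
      (∀ l < k, ∃ i ≤ M, c i = lo l) ∧
      (∀ l < k, ∃ i ≤ M, c i = hi l) ∧
      (∀ x, g 0 x = max (c 1 - x) 0 / (c 1 - c 0)) ∧
      (∀ j, 1 ≤ j → j < M → ∀ x,
        g j x = min (max (x - c (j - 1)) 0 / (c j - c (j - 1)))
          (max (c (j + 1) - x) 0 / (c (j + 1) - c j))) ∧
      (∀ x, g M x = max (x - c (M - 1)) 0 / (c M - c (M - 1))) ∧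
      (∀ ν : Measure ℝ, IsProbabilityMeasure ν → ν Xᶜ = 0 →
        (∀ j, 1 ≤ j → j ≤ M → ∫ x, g j x ∂ν = ∫ x, g j x ∂μ) →
        sInf {r | ∃ γ : Measure (ℝ × ℝ), IsProbabilityMeasure γ ∧
            γ.map Prod.fst = μ ∧ γ.map Prod.snd = ν ∧ r = ∫ p, |p.1 - p.2| ∂γ} ≤ ε) :=
  stmt_6_general k lo hi hlohi X hXdef μ hμ ε hε
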